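/- Generalized small-gain theorem with individual gains (signal form): Let β₁, β₂ be of class KL; γ₁ʸ, γ₂ʸ, γ₁ᵘ, γ₂ᵘ of class K; d₁, d₂, s_l ≥ 0; α₁⁰, α₂⁰ of class K and D₁⁰, D₂⁰ ≥ 0; and ρ₁, ρ₂ of class K∞ satisfying (Id + ρ₂)(γ₂ʸ((Id + ρ₁)(γ₁ʸ(s)))) ≤ s and (Id + ρ₁)(γ₁ʸ((Id + ρ₂)(γ₂ʸ(s)))) ≤ s for all s ≥ s_l. Then for every pair (ρ₃, r₃¹) of class K∞ functions there exist class KL functions β₁′, β₂′, a class K function r₃², and constants d₁′, d₂′ ≥ 0 (equal to zero when s_l = d₁ = d₂ = D₁⁰ = D₂⁰ = 0) with the following property. Whenever x₁, x₂, y₁, y₂ : ℝ≥0 → ℝ≥0 are functions bounded on compact intervals and X₁, X₂, U₁, U₂ ≥ 0 are constants such that for all 0 ≤ t₀ ≤ t: y₁(t) ≤ β₁(x₁(t₀), t − t₀) + γ₁ʸ(sup_{s ∈ [t₀,t]} y₂(s)) + γ₁ᵘ(U₁) + d₁, y₂(t) ≤ β₂(x₂(t₀), t − t₀) + γ₂ʸ(sup_{s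 ∈ [t₀,t]} y₁(s)) + γ₂ᵘ(U₂) + d₂, x₁(t) ≤ α₁⁰(X₁ + sup_{s ∈ [0,t]}(U₁ + y₁(s) + y₂(s))) + D₁⁰, x₂(t) ≤ α₂⁰(X₂ + sup_{s ∈ [0,t]}(U₂ + y₁(s) + y₂(s))) + D₂⁰, and x₁(0) ≤ X₁, x₂(0) ≤ X₂; then for all t ≥ 0: y₁(t) ≤ β₁′(X₁ + X₂, t) + (r₁ + r₃¹)(U₁ + U₂) + d₁′ and y₂(t) ≤ β₂′(X₁ + X₂, t) + (r₂ + r₃²)(U₁ + U₂) + d₂′, where r₁(s) = (Id + ρ₁⁻¹)((Id + ρ₃)²(γ₁ᵘ(s) + γ₁ʸ((Id + ρ₂⁻¹)((Id + ρ₃)²(γ₂ᵘ(s)))))) and r₂(s) = (Id + ρ₂⁻¹)((Id + ρ₃)²(γ₂ᵘ(s) + γ₂ʸ((Id + ρ₁⁻¹)((Id + ρ₃)²(γ₁ᵘ(s)))))). -/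

import Mathlib

open scoped NNReal

/-- A function `γ : ℝ≥0 → ℝ≥0` is of class K if it is continuous, strictly
increasing, and `γ 0 = 0`. -/
def ClassK (γ : ℝ≥0 → ℝ≥0) : Prop := Continuous γ ∧ StrictMono γ ∧ γ 0 = 0

/-- A function `ρ : ℝ≥0 → ℝ≥0` is of class K∞ if it is of class K and unbounded. -/
def ClassKInf (ρ : ℝ≥0 → ℝ≥0) : Prop :=
  ClassK ρ ∧ Filter.Tendsto ρ Filter.atTop Filter.atTop

/-- A function `β : ℝ≥0 × ℝ≥0 → ℝ≥0` is of class KL if `β (·, t)` is of class K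
for each `t`, and `β (s, ·)` is non-increasing and tends to `0` at `∞`. -/
def ClassKL (β : ℝ≥0 → ℝ≥0 → ℝ≥0) : Prop :=
  (∀ t : ℝ≥0, ClassK (fun s => β s t)) ∧
    (∀ s : ℝ≥0, Antitone (fun t => β s t) ∧
      Filter.Tendsto (fun t => β s t) Filter.atTop (nhds 0))

/-- `Ip ρ` is the pointwise sum `Id + ρ`. -/
def Ip (ρ : ℝ≥0 → ℝ≥0) : ℝ≥0 → ℝ≥0 := fun s => s + ρ s

/-!
On a bounded set of initial states and inputs every signal is bounded, and the small-gain
condition makes the loop map `b ↦ γ₁ʸ (γ₂ʸ b + u₂) + u₁` lower every bound above the level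
`max (s_l, u₁ + γ₁ʸ ((Id + ρ₂⁻¹) u₂), (Id + ρ₁⁻¹) ((Id + ρ₃) u₁))` by at least `ρ₃ u₁`. Since
`u₁` contains the slack `ε` by which the transients `βᵢ` have decayed after a fixed time, finitely
many round trips through the loop bring `y₁` down to that level. Splitting sums with
`a + b ≤ max ((Id + ρ₃) a, (Id + ρ₃⁻¹) b)` separates the level into the gain `r₁` of the inputs
and a constant; for large inputs the whole transient is absorbed by `r₃¹`. The KL function is
the supremum, over all trajectories, of the excess of `y₁` over this bound, majorized by a
function that is continuous and strictly increasing in the size of the initial states.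
-/

open Filter Set Function Topology

lemma ClassK.monotone {γ : ℝ≥0 → ℝ≥0} (h : ClassK γ) : Monotone γ := h.2.1.monotone

lemma ClassKInf.surjective {ρ : ℝ≥0 → ℝ≥0} (h : ClassKInf ρ) : Surjective ρ := by
  intro y
  obtain ⟨b, hb⟩ := (h.2.eventually_ge_atTop y).exists
  obtain ⟨x, -, hx⟩ := intermediate_value_Icc (zero_le : 0 ≤ b) h.1.1.continuousOn
    (show y ∈ Icc (ρ 0) (ρ b) by rw [h.1.2.2]; exact ⟨zero_le, hb⟩)
  exact ⟨x, hx⟩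

lemma OrderIso.map_zero_nnreal (e : ℝ≥0 ≃o ℝ≥0) : e 0 = 0 := e.map_bot

lemma le_Ip (ρ : ℝ≥0 → ℝ≥0) (a : ℝ≥0) : a ≤ Ip ρ a := le_self_add

lemma monotone_Ip {ρ : ℝ≥0 → ℝ≥0} (h : Monotone ρ) : Monotone (Ip ρ) :=
  fun _ _ hab => add_le_add hab (h hab)

@[gcongr]
lemma Ip_le_Ip (e : ℝ≥0 ≃o ℝ≥0) {a b : ℝ≥0} (h : a ≤ b) : Ip e a ≤ Ip e b :=
  monotone_Ip e.monotone h

@[fun_prop]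
lemma continuous_Ip {ρ : ℝ≥0 → ℝ≥0} (h : Continuous ρ) : Continuous (Ip ρ) :=
  continuous_id.add h

@[simp]
lemma Ip_orderIso_zero (e : ℝ≥0 ≃o ℝ≥0) : Ip e 0 = 0 := by simp [Ip, e.map_zero_nnreal]

lemma add_le_max_Ip (e : ℝ≥0 ≃o ℝ≥0) (a b : ℝ≥0) : a + b ≤ max (Ip e a) (Ip e.symm b) := by
  rcases le_total b (e a) with h | h
  · exact le_max_of_le_left (by rw [Ip]; gcongr)
  · exact le_max_of_le_right (by rw [Ip, add_comm]; gcongr; exact e.le_symm_apply.2 h)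

lemma Monotone.map_add_le_Ip {f : ℝ≥0 → ℝ≥0} (hf : Monotone f) (e : ℝ≥0 ≃o ℝ≥0) (a b : ℝ≥0) :
    f (a + b) ≤ f (Ip e a) + f (Ip e.symm b) :=
  (hf (add_le_max_Ip e a b)).trans (by rw [hf.map_max]; exact max_le_add_of_nonneg zero_le zero_le)

section ClassKLMajorant

variable {Φ : ℝ≥0 → ℝ≥0 → ℝ≥0}

lemma add_one_le_floor_add_two (s : ℝ≥0) : s + 1 ≤ ((⌊s⌋₊ + 2 : ℕ) : ℝ≥0) := by
  have := Nat.lt_floor_add_one s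
  push_cast
  calc s + 1 ≤ ⌊s⌋₊ + 1 + 1 := by gcongr
    _ = ⌊s⌋₊ + 2 := by ring

/-- A majorant of `Φ`, continuous in `s`: the `k`-th summand switches `Φ (k + 1) t` on linearly
as `s` runs through `[k - 1, k]`. -/
noncomputable def stepSum (Φ : ℝ≥0 → ℝ≥0 → ℝ≥0) (s t : ℝ≥0) : ℝ≥0 :=
  ∑' k : ℕ, min 1 (s + 1 - k) * Φ (k + 1) t

lemma stepSum_eq_sum {s : ℝ≥0} {K : ℕ} (hK : s + 1 ≤ K) (t : ℝ≥0) :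
    stepSum Φ s t = ∑ k ∈ Finset.range K, min 1 (s + 1 - k) * Φ (k + 1) t := by
  refine tsum_eq_sum fun k hk => ?_
  have : s + 1 ≤ k := hK.trans (by exact_mod_cast not_lt.1 (Finset.mem_range.not.1 hk))
  simp [tsub_eq_zero_of_le this]

lemma le_stepSum (hΦ : ∀ t, Monotone (Φ · t)) (s t : ℝ≥0) : Φ s t ≤ stepSum Φ s t := by
  have hfloor := Nat.lt_floor_add_one s
  rw [stepSum_eq_sum (add_one_le_floor_add_two s)]
  calc Φ s t ≤ min 1 (s + 1 - ⌊s⌋₊) * Φ (⌊s⌋₊ + 1) t := by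
        rw [min_eq_left (le_tsub_of_add_le_left (by gcongr; exact Nat.floor_le zero_le)), one_mul]
        exact hΦ t hfloor.le
    _ ≤ _ := Finset.single_le_sum (f := fun k : ℕ => min 1 (s + 1 - k) * Φ (k + 1) t)
        (fun _ _ => zero_le) (by simp)

lemma monotone_stepSum (t : ℝ≥0) : Monotone (stepSum Φ · t) := by
  intro s s' h
  have hK := add_one_le_floor_add_two s'
  simp only [stepSum_eq_sum ((by gcongr : s + 1 ≤ s' + 1).trans hK), stepSum_eq_sum hK]
  gcongr

lemma antitone_stepSum (hΦ : ∀ s, Antitone (Φ s)) (s : ℝ≥0) : Antitone (stepSum Φ s) := by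
  intro t t' h
  simp only [stepSum_eq_sum (add_one_le_floor_add_two s)]
  gcongr with k
  exact hΦ _ h

lemma continuous_stepSum (t : ℝ≥0) : Continuous (stepSum Φ · t) := by
  refine continuous_iff_continuousAt.2 fun s₀ => ?_
  have hsum : ContinuousAt (fun s : ℝ≥0 => ∑ k ∈ Finset.range (⌊s₀⌋₊ + 2),
      min 1 (s + 1 - k) * Φ (k + 1) t) s₀ := by fun_prop
  refine hsum.congr (eventually_of_mem (Iio_mem_nhds (Nat.lt_floor_add_one s₀)) fun s hs => ?_)
  refine (stepSum_eq_sum ?_ t).symm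
  push_cast
  calc s + 1 ≤ ⌊s₀⌋₊ + 1 + 1 := by gcongr; exact le_of_lt hs
    _ = ⌊s₀⌋₊ + 2 := by ring

lemma tendsto_stepSum (hΦ : ∀ s, Tendsto (Φ s) atTop (𝓝 0)) (s : ℝ≥0) :
    Tendsto (stepSum Φ s) atTop (𝓝 0) := by
  rw [funext (stepSum_eq_sum (Φ := Φ) (add_one_le_floor_add_two s))]
  simpa using tendsto_finsetSum (Finset.range (⌊s⌋₊ + 2)) fun (k : ℕ) _ =>
    (hΦ (k + 1)).const_mul (min 1 (s + 1 - k))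

theorem exists_classKL_ge (G : ℝ≥0 → ℝ≥0) (hGc : Continuous G) (hGm : Monotone G)
    (hG0 : G 0 = 0) (hΦG : ∀ s t, Φ s t ≤ G s) (hΦs : ∀ t, Monotone (Φ · t))
    (hΦt : ∀ s, Antitone (Φ s)) (hΦ0 : ∀ s, Tendsto (Φ s) atTop (𝓝 0)) :
    ∃ β, ClassKL β ∧ ∀ s t, Φ s t ≤ β s t := by
  have hinv : Tendsto (fun t : ℝ≥0 => (1 + t)⁻¹) atTop (𝓝 0) :=
    (tendsto_atTop_mono (fun _ => le_add_self) tendsto_id).inv_tendsto_atTop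
  -- `min (G s)` forces `β 0 t = 0`; the summand `s / (1 + t)` makes `β` strictly increasing in `s`
  refine ⟨fun s t => min (G s) (stepSum Φ s t) + s * (1 + t)⁻¹,
    ⟨fun t => ⟨?_, ?_, by simp [hG0]⟩, fun s => ⟨?_, ?_⟩⟩, fun s t => ?_⟩
  · exact (hGc.min (continuous_stepSum t)).add (continuous_id.mul continuous_const)
  · exact (hGm.min (monotone_stepSum t)).add_strictMono
      (strictMono_mul_right_of_pos (by positivity))
  · exact fun t t' h => add_le_add (min_le_min le_rfl (antitone_stepSum hΦt s h)) (by gcongr)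
  · refine tendsto_of_tendsto_of_tendsto_of_le_of_le tendsto_const_nhds ?_ (fun _ => zero_le)
      fun t => add_le_add_left (min_le_right _ _) _
    simpa using (tendsto_stepSum hΦ0 s).add (hinv.const_mul s)
  · exact (le_min (hΦG s t) (le_stepSum hΦs s t)).trans le_self_add

theorem exists_classKL_of_bounds {ι : Type*} (X : ι → ℝ≥0) (y : ι → ℝ≥0 → ℝ≥0)
    (B : ι → ℝ≥0) (G : ℝ≥0 → ℝ≥0) (hGc : Continuous G) (hGm : Monotone G) (hG0 : G 0 = 0)
    (hle : ∀ i t, y i t ≤ G (X i) + B i)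
    (htail : ∀ s ε, 0 < ε → ∀ᶠ t in atTop, ∀ i, X i ≤ s → y i t ≤ B i + ε) :
    ∃ β, ClassKL β ∧ ∀ i t, y i t ≤ β (X i) t + B i := by
  set E : ℝ≥0 → ℝ≥0 → Set ℝ≥0 := fun s t =>
    (fun p : ι × ℝ≥0 => y p.1 p.2 - B p.1) '' {p | X p.1 ≤ s ∧ t ≤ p.2}
  have hub : ∀ s t, G s ∈ upperBounds (E s t) := fun s t =>
    forall_mem_image.2 fun p hp =>
      tsub_le_iff_right.2 ((hle p.1 p.2).trans (by gcongr; exact hGm hp.1))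
  have hbdd : ∀ s t, BddAbove (E s t) := fun s t => ⟨G s, hub s t⟩
  obtain ⟨β, hβ, hEβ⟩ := exists_classKL_ge (Φ := fun s t => sSup (E s t)) G hGc hGm hG0
    (fun s t => csSup_le' (hub s t))
    (fun t s s' h => csSup_le_csSup' (hbdd s' t) (image_mono fun p hp => ⟨hp.1.trans h, hp.2⟩))
    (fun s t t' h => csSup_le_csSup' (hbdd s t) (image_mono fun p hp => ⟨hp.1, h.trans hp.2⟩))
    fun s => by
      refine tendsto_order.2 ⟨fun a ha => absurd ha not_lt_zero, fun a ha => ?_⟩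
      obtain ⟨T, hT⟩ := eventually_atTop.1 (htail s (a / 2) (half_pos ha))
      filter_upwards [eventually_ge_atTop T] with t ht
      refine (csSup_le' (forall_mem_image.2 fun p hp => ?_)).trans_lt (half_lt_self ha)
      exact tsub_le_iff_left.2 (hT p.2 (ht.trans hp.2) p.1 hp.1)
  refine ⟨β, hβ, fun i t => tsub_le_iff_right.1 ?_⟩
  exact (le_csSup (hbdd _ _) ⟨(i, t), ⟨le_rfl, le_rfl⟩, rfl⟩).trans (hEβ _ _)

end ClassKLMajorant

namespace SmallGain

variable (γ₁ : ℝ≥0 → ℝ≥0) (e₁ e₂ e₃ : ℝ≥0 ≃o ℝ≥0) (s_l : ℝ≥0)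

/-- The level to which the loop map `b ↦ γ₁ (γ₂ b + u₂) + u₁` brings every `b`, up to a
decrease by `e₃ u₁` per step. -/
def level (u₁ u₂ : ℝ≥0) : ℝ≥0 :=
  max s_l (max (u₁ + γ₁ (Ip e₂.symm u₂)) (Ip e₁.symm (Ip e₃ u₁)))

/-- The gain `r₁` of the theorem, with `eᵢ = ρᵢ`. -/
def gain (γ₁u γ₂u : ℝ≥0 → ℝ≥0) (U : ℝ≥0) : ℝ≥0 :=
  Ip e₁.symm (Ip e₃ (Ip e₃ (γ₁u U + γ₁ (Ip e₂.symm (Ip e₃ (Ip e₃ (γ₂u U)))))))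

/-- What splitting the constants `c₁`, `c₂` off the inputs costs; `offset d₁ d₂` is `d₁'`. -/
def offset (c₁ c₂ : ℝ≥0) : ℝ≥0 :=
  s_l + Ip e₃.symm (c₁ + γ₁ (Ip e₂.symm (Ip e₃.symm c₂))) + Ip e₁.symm (Ip e₃ (Ip e₃.symm c₁))

variable {γ₁ e₁ e₂ e₃ s_l} {γ₂ : ℝ≥0 → ℝ≥0}

lemma level_mono (hγ₁ : Monotone γ₁) {u₁ u₂ v₁ v₂ : ℝ≥0} (h₁ : u₁ ≤ v₁) (h₂ : u₂ ≤ v₂) :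
    level γ₁ e₁ e₂ e₃ s_l u₁ u₂ ≤ level γ₁ e₁ e₂ e₃ s_l v₁ v₂ := by
  unfold level
  gcongr
  exact hγ₁ (by gcongr)

lemma map_le_level_or_lt (hγ₁ : Monotone γ₁)
    (hsg : ∀ s, s_l ≤ s → Ip e₁ (γ₁ (Ip e₂ (γ₂ s))) ≤ s) {b : ℝ≥0} (hb : s_l ≤ b) (u₁ u₂ : ℝ≥0) :
    γ₁ (γ₂ b + u₂) + u₁ ≤ level γ₁ e₁ e₂ e₃ s_l u₁ u₂ ∨ γ₁ (γ₂ b + u₂) + u₁ + e₃ u₁ < b := by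
  set v := γ₁ (Ip e₂ (γ₂ b))
  have hsplit : γ₁ (γ₂ b + u₂) + u₁ ≤ max (v + u₁) (γ₁ (Ip e₂.symm u₂) + u₁) := by
    rw [max_add_add_right, ← hγ₁.map_max]
    gcongr
    exact hγ₁ (add_le_max_Ip e₂ _ _)
  rcases le_max_iff.1 hsplit with h | h
  -- the small-gain condition gives `v + e₁ v ≤ b`
  · by_cases hv : e₁ v ≤ Ip e₃ u₁
    · refine .inl (h.trans (le_max_of_le_right (le_max_of_le_right ?_)))
      exact (add_le_add (e₁.le_symm_apply.2 hv) (le_Ip _ _)).trans_eq (add_comm _ _)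
    · refine .inr ?_
      calc γ₁ (γ₂ b + u₂) + u₁ + e₃ u₁ ≤ v + Ip e₃ u₁ := by rw [Ip, ← add_assoc]; gcongr
        _ < v + e₁ v := by gcongr; exact not_le.1 hv
        _ ≤ b := hsg b hb
  · exact .inl (h.trans (le_max_of_le_right (le_max_of_le_left (by rw [add_comm]))))

lemma le_level_of_le_map (hγ₁ : Monotone γ₁)
    (hsg : ∀ s, s_l ≤ s → Ip e₁ (γ₁ (Ip e₂ (γ₂ s))) ≤ s) {b u₁ u₂ : ℝ≥0}
    (hb : b ≤ γ₁ (γ₂ b + u₂) + u₁) : b ≤ level γ₁ e₁ e₂ e₃ s_l u₁ u₂ := by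
  rcases lt_or_ge b s_l with h | h
  · exact h.le.trans (le_max_left _ _)
  rcases map_le_level_or_lt (e₃ := e₃) hγ₁ hsg h u₁ u₂ with h' | h'
  · exact hb.trans h'
  · exact absurd (hb.trans_lt (le_self_add.trans_lt h')) (lt_irrefl b)

lemma map_le_max_level (hγ₁ : Monotone γ₁) (hγ₂ : Monotone γ₂)
    (hsg : ∀ s, s_l ≤ s → Ip e₁ (γ₁ (Ip e₂ (γ₂ s))) ≤ s) (b u₁ u₂ : ℝ≥0) :
    γ₁ (γ₂ b + u₂) + u₁ ≤ max (level γ₁ e₁ e₂ e₃ s_l u₁ u₂) (b - e₃ u₁) := by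
  rcases le_total s_l b with h | h
  · rcases map_le_level_or_lt hγ₁ hsg h u₁ u₂ with h' | h'
    · exact le_max_of_le_left h'
    · exact le_max_of_le_right (le_tsub_of_add_le_right h'.le)
  · have hmap : γ₁ (γ₂ b + u₂) + u₁ ≤ γ₁ (γ₂ s_l + u₂) + u₁ := by
      gcongr; exact hγ₁ (by gcongr; exact hγ₂ h)
    refine le_max_of_le_left (hmap.trans ?_)
    rcases map_le_level_or_lt (e₃ := e₃) hγ₁ hsg le_rfl u₁ u₂ with h' | h'
    · exact h'
    · exact (le_self_add.trans h'.le).trans (le_max_left _ _)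

lemma level_le_gain_add_offset (hγ₁ : Monotone γ₁) {γ₁u γ₂u : ℝ≥0 → ℝ≥0}
    {U u₁ u₂ c₁ c₂ : ℝ≥0} (h₁ : u₁ ≤ γ₁u U + c₁) (h₂ : u₂ ≤ γ₂u U + c₂) :
    level γ₁ e₁ e₂ e₃ s_l u₁ u₂ ≤ gain γ₁ e₁ e₂ e₃ γ₁u γ₂u U + offset γ₁ e₁ e₂ e₃ s_l c₁ c₂ := by
  set W := γ₁ (Ip e₂.symm (Ip e₃ (Ip e₃ (γ₂u U))))
  set E := γ₁ (Ip e₂.symm (Ip e₃.symm c₂))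
  have hR : Ip e₃ (γ₁u U + W) ≤ gain γ₁ e₁ e₂ e₃ γ₁u γ₂u U :=
    (le_Ip _ _).trans (le_Ip _ _)
  have hW : γ₁ (Ip e₂.symm u₂) ≤ W + E :=
    calc γ₁ (Ip e₂.symm u₂) ≤ γ₁ (Ip e₂.symm (γ₂u U + c₂)) := hγ₁ (by gcongr)
      _ ≤ γ₁ (Ip e₂.symm (Ip e₃ (γ₂u U))) + E :=
        (hγ₁.comp (monotone_Ip e₂.symm.monotone)).map_add_le_Ip e₃ _ _
      _ ≤ W + E := by gcongr; exact hγ₁ (by gcongr; exact le_Ip _ _)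
  refine max_le (le_add_left (le_self_add.trans le_self_add)) (max_le ?_ ?_)
  · calc u₁ + γ₁ (Ip e₂.symm u₂) ≤ (γ₁u U + W) + (c₁ + E) := by
          rw [add_add_add_comm]; exact add_le_add h₁ hW
      _ ≤ Ip e₃ (γ₁u U + W) + Ip e₃.symm (c₁ + E) := monotone_id.map_add_le_Ip e₃ _ _
      _ ≤ _ := add_le_add hR (le_add_self.trans le_self_add)
  · calc Ip e₁.symm (Ip e₃ u₁) ≤ Ip e₁.symm (Ip e₃ (γ₁u U + c₁)) := by gcongr
      _ ≤ Ip e₁.symm (Ip e₃ (Ip e₃ (γ₁u U))) + Ip e₁.symm (Ip e₃ (Ip e₃.symm c₁)) :=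
        ((monotone_Ip e₁.symm.monotone).comp (monotone_Ip e₃.monotone)).map_add_le_Ip e₃ _ _
      _ ≤ _ := by unfold gain; gcongr; exacts [le_self_add, le_add_self]

lemma offset_mono (hγ₁ : Monotone γ₁) {c₁ c₂ c₁' c₂' : ℝ≥0} (h₁ : c₁ ≤ c₁') (h₂ : c₂ ≤ c₂') :
    offset γ₁ e₁ e₂ e₃ s_l c₁ c₂ ≤ offset γ₁ e₁ e₂ e₃ s_l c₁' c₂' := by
  unfold offset
  gcongr
  exact hγ₁ (by gcongr)

lemma offset_zero (hγ₁ : γ₁ 0 = 0) : offset γ₁ e₁ e₂ e₃ 0 0 0 = 0 := by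
  simp [offset, hγ₁]

lemma continuous_offset (hγ₁ : Continuous γ₁) :
    Continuous fun c : ℝ≥0 × ℝ≥0 => offset γ₁ e₁ e₂ e₃ s_l c.1 c.2 := by
  have := e₁.symm.continuous
  have := e₂.symm.continuous
  have := e₃.continuous
  have := e₃.symm.continuous
  unfold offset
  fun_prop

lemma exists_pos_offset_add_lt (hγ₁ : Continuous γ₁) (c₁ c₂ : ℝ≥0) {ε : ℝ≥0} (hε : 0 < ε) :
    ∃ ε' > 0, offset γ₁ e₁ e₂ e₃ s_l (c₁ + ε') (c₂ + ε') < offset γ₁ e₁ e₂ e₃ s_l c₁ c₂ + ε := by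
  have hcont : ContinuousAt (fun ε' => offset γ₁ e₁ e₂ e₃ s_l (c₁ + ε') (c₂ + ε')) 0 :=
    ((continuous_offset hγ₁).comp
      (by fun_prop : Continuous fun ε' => (c₁ + ε', c₂ + ε'))).continuousAt
  have h0 : offset γ₁ e₁ e₂ e₃ s_l (c₁ + 0) (c₂ + 0) < offset γ₁ e₁ e₂ e₃ s_l c₁ c₂ + ε := by
    rw [add_zero, add_zero]
    exact lt_add_of_pos_right _ hε
  have hlt := (hcont.eventually (gt_mem_nhds h0)).filter_mono (nhdsWithin_le_nhds (s := Ioi 0))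
  obtain ⟨ε', hε', hpos⟩ := (hlt.and self_mem_nhdsWithin).exists
  exact ⟨ε', hpos, hε'⟩

end SmallGain

lemma sSup_image_le {f : ℝ≥0 → ℝ≥0} {s : Set ℝ≥0} {c : ℝ≥0} (h : ∀ τ ∈ s, f τ ≤ c) :
    sSup (f '' s) ≤ c :=
  csSup_le' (forall_mem_image.2 h)

/-- A subsystem that is input-to-output practically stable with gains `β, γy, γu, d` and
boundedness observable with gains `α, D`. -/
structure Subsystem where
  β : ℝ≥0 → ℝ≥0 → ℝ≥0
  γy : ℝ≥0 → ℝ≥0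
  γu : ℝ≥0 → ℝ≥0
  α : ℝ≥0 → ℝ≥0
  d : ℝ≥0
  D : ℝ≥0
  classKL_β : ClassKL β
  classK_γy : ClassK γy
  monotone_γu : Monotone γu
  monotone_α : Monotone α

/-- The signals of one subsystem: the norm `x` of its state, its output `y`, and the bounds
`X` on `x 0` and `U` on its external input. -/
structure Trajectory where
  x : ℝ≥0 → ℝ≥0
  y : ℝ≥0 → ℝ≥0
  X : ℝ≥0
  U : ℝ≥0

namespace Subsystem

/-- `p` is a trajectory of `S` driven by the output `y'` of the other subsystem. -/
structure IsTrajectory (S : Subsystem) (p : Trajectory) (y' : ℝ≥0 → ℝ≥0) : Prop where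
  bddAbove : ∀ t, BddAbove (p.y '' Icc 0 t)
  io : ∀ t₀ t, t₀ ≤ t →
    p.y t ≤ S.β (p.x t₀) (t - t₀) + S.γy (sSup (y' '' Icc t₀ t)) + S.γu p.U + S.d
  uo : ∀ t, p.x t ≤ S.α (p.X + sSup ((fun s => p.U + p.y s + y' s) '' Icc 0 t)) + S.D
  init : p.x 0 ≤ p.X

/-- The bound on the output of `S` while the other output vanishes. -/
def peak (S : Subsystem) (X U : ℝ≥0) : ℝ≥0 := S.β X 0 + S.γu U + S.d

variable {S : Subsystem} {p : Trajectory} {y' : ℝ≥0 → ℝ≥0}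

lemma peak_mono {X U X' U' : ℝ≥0} (hX : X ≤ X') (hU : U ≤ U') : S.peak X U ≤ S.peak X' U' := by
  unfold peak
  gcongr
  exacts [(S.classKL_β.1 0).monotone hX, S.monotone_γu hU]

lemma peak_le {X U X' U' : ℝ≥0} (hX : X ≤ X') (hU : U ≤ U') :
    S.peak X U ≤ S.γu U' + (S.β X' 0 + S.d) :=
  (peak_mono hX hU).trans_eq (by unfold peak; ring)

lemma IsTrajectory.le_sSup (h : S.IsTrajectory p y') (t : ℝ≥0) : p.y t ≤ sSup (p.y '' Icc 0 t) :=
  le_csSup (h.bddAbove t) (mem_image_of_mem _ ⟨zero_le, le_rfl⟩)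

lemma IsTrajectory.sSup_le (h : S.IsTrajectory p y') {t : ℝ≥0} (hy' : BddAbove (y' '' Icc 0 t)) :
    sSup (p.y '' Icc 0 t) ≤ S.γy (sSup (y' '' Icc 0 t)) + S.peak p.X p.U := by
  refine sSup_image_le fun τ hτ => (h.io 0 τ zero_le).trans ?_
  have hβ : S.β (p.x 0) (τ - 0) ≤ S.β p.X 0 :=
    ((S.classKL_β.1 _).monotone h.init).trans ((S.classKL_β.2 _).1 zero_le)
  have hγ : S.γy (sSup (y' '' Icc 0 τ)) ≤ S.γy (sSup (y' '' Icc 0 t)) :=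
    S.classK_γy.monotone (csSup_le_csSup' hy' (image_mono (Icc_subset_Icc_right hτ.2)))
  calc _ ≤ S.β p.X 0 + S.γy (sSup (y' '' Icc 0 t)) + S.γu p.U + S.d := by gcongr
    _ = _ := by unfold peak; ring

lemma IsTrajectory.x_le (h : S.IsTrajectory p y') {M M' : ℝ≥0} (hy : ∀ t, p.y t ≤ M)
    (hy' : ∀ t, y' t ≤ M') (t : ℝ≥0) : p.x t ≤ S.α (p.X + (p.U + M + M')) + S.D := by
  refine (h.uo t).trans ?_
  gcongr
  exact S.monotone_α (by gcongr; exact sSup_image_le fun τ _ => by gcongr; exacts [hy τ, hy' τ])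

lemma IsTrajectory.le_of_eventually_le (h : S.IsTrajectory p y') {N τ ε T b : ℝ≥0}
    (hx : ∀ t, p.x t ≤ N) (hτ : S.β N τ ≤ ε) (hy' : ∀ t, T ≤ t → y' t ≤ b) :
    ∀ t, T + τ ≤ t → p.y t ≤ S.γy b + (S.γu p.U + S.d + ε) := by
  intro t ht
  have hT : T ≤ t := le_self_add.trans ht
  have hβ : S.β (p.x T) (t - T) ≤ ε :=
    ((S.classKL_β.1 _).monotone (hx T)).trans
      (((S.classKL_β.2 N).1 (le_tsub_of_add_le_left ht)).trans hτ)
  have hγ : S.γy (sSup (y' '' Icc T t)) ≤ S.γy b :=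
    S.classK_γy.monotone (sSup_image_le fun s hs => hy' s hs.1)
  calc p.y t ≤ ε + S.γy b + S.γu p.U + S.d := (h.io T t hT).trans (by gcongr)
    _ = _ := by ring

end Subsystem

namespace SmallGain

open Subsystem

/-- The part of the transient bound that depends on the initial states. -/
noncomputable def overshoot (S₁ S₂ : Subsystem) (e₁ e₂ e₃ : ℝ≥0 ≃o ℝ≥0) (s_l X : ℝ≥0) : ℝ≥0 :=
  offset S₁.γy e₁ e₂ e₃ s_l (S₁.β X 0 + S₁.d) (S₂.β X 0 + S₂.d) -
    offset S₁.γy e₁ e₂ e₃ s_l S₁.d S₂.d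

variable {S₁ S₂ : Subsystem} {e₁ e₂ e₃ : ℝ≥0 ≃o ℝ≥0} {s_l : ℝ≥0} {p₁ p₂ : Trajectory}

lemma continuous_overshoot : Continuous (overshoot S₁ S₂ e₁ e₂ e₃ s_l) :=
  ((continuous_offset S₁.classK_γy.1).comp
    (((S₁.classKL_β.1 0).1.add continuous_const).prodMk
      ((S₂.classKL_β.1 0).1.add continuous_const))).sub continuous_const

lemma monotone_overshoot : Monotone (overshoot S₁ S₂ e₁ e₂ e₃ s_l) := fun _ _ h =>
  tsub_le_tsub_right (offset_mono S₁.classK_γy.monotone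
    (by gcongr; exact (S₁.classKL_β.1 0).monotone h)
    (by gcongr; exact (S₂.classKL_β.1 0).monotone h)) _

lemma overshoot_zero : overshoot S₁ S₂ e₁ e₂ e₃ s_l 0 = 0 := by
  simp [overshoot, (S₁.classKL_β.1 0).2.2, (S₂.classKL_β.1 0).2.2]

lemma sSup_le_level (hsg : ∀ s, s_l ≤ s → Ip e₁ (S₁.γy (Ip e₂ (S₂.γy s))) ≤ s)
    (h₁ : S₁.IsTrajectory p₁ p₂.y) (h₂ : S₂.IsTrajectory p₂ p₁.y) (t : ℝ≥0) :
    sSup (p₁.y '' Icc 0 t) ≤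
      level S₁.γy e₁ e₂ e₃ s_l (S₁.peak p₁.X p₁.U) (S₂.peak p₂.X p₂.U) := by
  refine le_level_of_le_map S₁.classK_γy.monotone hsg ((h₁.sSup_le (h₂.bddAbove t)).trans ?_)
  gcongr
  exact S₁.classK_γy.monotone (h₂.sSup_le (h₁.bddAbove t))

lemma y_le_overshoot_add (hsg : ∀ s, s_l ≤ s → Ip e₁ (S₁.γy (Ip e₂ (S₂.γy s))) ≤ s)
    (h₁ : S₁.IsTrajectory p₁ p₂.y) (h₂ : S₂.IsTrajectory p₂ p₁.y) (t : ℝ≥0) :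
    p₁.y t ≤ overshoot S₁ S₂ e₁ e₂ e₃ s_l (p₁.X + p₂.X) +
      (gain S₁.γy e₁ e₂ e₃ S₁.γu S₂.γu (p₁.U + p₂.U) + offset S₁.γy e₁ e₂ e₃ s_l S₁.d S₂.d) := by
  calc p₁.y t ≤ level S₁.γy e₁ e₂ e₃ s_l (S₁.peak p₁.X p₁.U) (S₂.peak p₂.X p₂.U) :=
        (h₁.le_sSup t).trans (sSup_le_level hsg h₁ h₂ t)
    _ ≤ gain S₁.γy e₁ e₂ e₃ S₁.γu S₂.γu (p₁.U + p₂.U) + offset S₁.γy e₁ e₂ e₃ s_l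
          (S₁.β (p₁.X + p₂.X) 0 + S₁.d) (S₂.β (p₁.X + p₂.X) 0 + S₂.d) :=
        level_le_gain_add_offset S₁.classK_γy.monotone (peak_le le_self_add le_self_add)
          (peak_le le_add_self le_add_self)
    _ ≤ _ := by rw [add_left_comm]; gcongr; exact le_tsub_add

lemma outputs_le_of_le (hsg : ∀ s, s_l ≤ s → Ip e₁ (S₁.γy (Ip e₂ (S₂.γy s))) ≤ s)
    (h₁ : S₁.IsTrajectory p₁ p₂.y) (h₂ : S₂.IsTrajectory p₂ p₁.y) {s U : ℝ≥0}
    (hX : p₁.X + p₂.X ≤ s) (hU : p₁.U + p₂.U ≤ U) :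
    (∀ t, p₁.y t ≤ level S₁.γy e₁ e₂ e₃ s_l (S₁.peak s U) (S₂.peak s U)) ∧
      ∀ t, p₂.y t ≤ S₂.γy (level S₁.γy e₁ e₂ e₃ s_l (S₁.peak s U) (S₂.peak s U)) + S₂.peak s U := by
  have hS : ∀ t, sSup (p₁.y '' Icc 0 t) ≤
      level S₁.γy e₁ e₂ e₃ s_l (S₁.peak s U) (S₂.peak s U) := fun t =>
    (sSup_le_level hsg h₁ h₂ t).trans (level_mono S₁.classK_γy.monotone
      (peak_mono (le_self_add.trans hX) (le_self_add.trans hU))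
      (peak_mono (le_add_self.trans hX) (le_add_self.trans hU)))
  refine ⟨fun t => (h₁.le_sSup t).trans (hS t), fun t => ?_⟩
  refine (h₂.le_sSup t).trans ((h₂.sSup_le (h₁.bddAbove t)).trans ?_)
  gcongr
  exacts [S₂.classK_γy.monotone (hS t), peak_mono (le_add_self.trans hX) (le_add_self.trans hU)]

/-- With the transients decayed to `ε` within `τ`, every round trip of length `2 τ` through the
loop lowers the eventual bound on `p₁.y` by `e₃ ε` until it reaches the level. -/
lemma y_le_level_of_bounded (hsg : ∀ s, s_l ≤ s → Ip e₁ (S₁.γy (Ip e₂ (S₂.γy s))) ≤ s)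
    (h₁ : S₁.IsTrajectory p₁ p₂.y) (h₂ : S₂.IsTrajectory p₂ p₁.y) {M N₁ N₂ τ ε t : ℝ≥0} {n : ℕ}
    (hy : ∀ t, p₁.y t ≤ M) (hx₁ : ∀ t, p₁.x t ≤ N₁) (hx₂ : ∀ t, p₂.x t ≤ N₂)
    (hτ₁ : S₁.β N₁ τ ≤ ε) (hτ₂ : S₂.β N₂ τ ≤ ε) (hn : M ≤ n * e₃ ε) (ht : n * (2 * τ) ≤ t) :
    p₁.y t ≤ level S₁.γy e₁ e₂ e₃ s_l (S₁.γu p₁.U + S₁.d + ε) (S₂.γu p₂.U + S₂.d + ε) := by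
  set Θ := level S₁.γy e₁ e₂ e₃ s_l (S₁.γu p₁.U + S₁.d + ε) (S₂.γu p₂.U + S₂.d + ε)
  set δ := e₃ ε
  suffices key : ∀ k : ℕ, ∀ t, k * (2 * τ) ≤ t → p₁.y t ≤ max Θ (M - k * δ) by
    simpa [tsub_eq_zero_of_le hn] using key n t ht
  intro k
  induction k with
  | zero => exact fun t _ => by simpa using (hy t).trans (le_max_right Θ M)
  | succ k ih =>
    intro t ht
    have hy₂ := h₂.le_of_eventually_le hx₂ hτ₂ ih
    refine (h₁.le_of_eventually_le hx₁ hτ₁ hy₂ t ((by push_cast; ring : _ = _).le.trans ht)).trans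
      ((map_le_max_level S₁.classK_γy.monotone S₂.classK_γy.monotone hsg _ _ _).trans
        (max_le (le_max_left _ _) ?_))
    have hM : M ≤ M - (k + 1 : ℕ) * δ + δ + k * δ :=
      (le_tsub_add : M ≤ M - (k + 1 : ℕ) * δ + (k + 1 : ℕ) * δ).trans_eq (by push_cast; ring)
    calc max Θ (M - k * δ) - e₃ (S₁.γu p₁.U + S₁.d + ε) ≤ max Θ (M - k * δ) - δ :=
          tsub_le_tsub_left (e₃.monotone le_add_self) _
      _ ≤ max Θ (M - (k + 1 : ℕ) * δ) := by
          rw [tsub_le_iff_right]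
          refine max_le ((le_max_left _ _).trans le_self_add) ?_
          exact (tsub_le_iff_right.2 hM).trans (by gcongr; exact le_max_right _ _)

lemma eventually_y_le_level (hsg : ∀ s, s_l ≤ s → Ip e₁ (S₁.γy (Ip e₂ (S₂.γy s))) ≤ s)
    (s U₀ ε : ℝ≥0) (hε : 0 < ε) :
    ∀ᶠ t in atTop, ∀ p₁ p₂ : Trajectory, S₁.IsTrajectory p₁ p₂.y → S₂.IsTrajectory p₂ p₁.y →
      p₁.X + p₂.X ≤ s → p₁.U + p₂.U ≤ U₀ →
        p₁.y t ≤ level S₁.γy e₁ e₂ e₃ s_l (S₁.γu p₁.U + S₁.d + ε) (S₂.γu p₂.U + S₂.d + ε) := by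
  set M₁ := level S₁.γy e₁ e₂ e₃ s_l (S₁.peak s U₀) (S₂.peak s U₀)
  set M₂ := S₂.γy M₁ + S₂.peak s U₀
  set N₁ := S₁.α (s + (U₀ + M₁ + M₂)) + S₁.D
  set N₂ := S₂.α (s + (U₀ + M₂ + M₁)) + S₂.D
  obtain ⟨τ, hτ₁, hτ₂⟩ := (((S₁.classKL_β.2 N₁).2.eventually (eventually_le_nhds hε)).and
    ((S₂.classKL_β.2 N₂).2.eventually (eventually_le_nhds hε))).exists
  have hδ : 0 < e₃ ε := by simpa [e₃.map_zero_nnreal] using e₃.strictMono hε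
  obtain ⟨n, hn⟩ := exists_nat_ge (M₁ / e₃ ε)
  filter_upwards [eventually_ge_atTop (n * (2 * τ))] with t ht p₁ p₂ h₁ h₂ hX hU
  obtain ⟨hy₁, hy₂⟩ := outputs_le_of_le hsg h₁ h₂ hX hU
  have hX₁ : p₁.X ≤ s := le_self_add.trans hX
  have hX₂ : p₂.X ≤ s := le_add_self.trans hX
  have hU₁ : p₁.U ≤ U₀ := le_self_add.trans hU
  have hU₂ : p₂.U ≤ U₀ := le_add_self.trans hU
  have hx₁ : ∀ t, p₁.x t ≤ N₁ := fun t =>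
    (h₁.x_le hy₁ hy₂ t).trans (show _ ≤ S₁.α _ + S₁.D by gcongr; exact S₁.monotone_α (by gcongr))
  have hx₂ : ∀ t, p₂.x t ≤ N₂ := fun t =>
    (h₂.x_le hy₂ hy₁ t).trans (show _ ≤ S₂.α _ + S₂.D by gcongr; exact S₂.monotone_α (by gcongr))
  exact y_le_level_of_bounded hsg h₁ h₂ hy₁ hx₁ hx₂ hτ₁ hτ₂ ((div_le_iff₀ hδ).1 hn) ht

lemma eventually_y_le (hsg : ∀ s, s_l ≤ s → Ip e₁ (S₁.γy (Ip e₂ (S₂.γy s))) ≤ s)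
    {r : ℝ≥0 → ℝ≥0} (hr : Tendsto r atTop atTop) (s ε : ℝ≥0) (hε : 0 < ε) :
    ∀ᶠ t in atTop, ∀ p₁ p₂ : Trajectory, S₁.IsTrajectory p₁ p₂.y → S₂.IsTrajectory p₂ p₁.y →
      p₁.X + p₂.X ≤ s → p₁.y t ≤ gain S₁.γy e₁ e₂ e₃ S₁.γu S₂.γu (p₁.U + p₂.U) +
        r (p₁.U + p₂.U) + offset S₁.γy e₁ e₂ e₃ s_l S₁.d S₂.d + ε := by
  obtain ⟨ε', hε', hε'c⟩ :=
    exists_pos_offset_add_lt (e₁ := e₁) (e₂ := e₂) (e₃ := e₃) (s_l := s_l) S₁.classK_γy.1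
      S₁.d S₂.d hε
  -- inputs above `U₀` are large enough for `r` to absorb the whole transient
  obtain ⟨U₀, hU₀⟩ := eventually_atTop.1 (hr.eventually_ge_atTop (overshoot S₁ S₂ e₁ e₂ e₃ s_l s))
  filter_upwards [eventually_y_le_level hsg s U₀ ε' hε'] with t ht p₁ p₂ h₁ h₂ hX
  set U := p₁.U + p₂.U
  set R := gain S₁.γy e₁ e₂ e₃ S₁.γu S₂.γu U
  rcases le_total U₀ U with hU | hU
  · calc p₁.y t ≤ overshoot S₁ S₂ e₁ e₂ e₃ s_l (p₁.X + p₂.X) +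
          (R + offset S₁.γy e₁ e₂ e₃ s_l S₁.d S₂.d) := y_le_overshoot_add hsg h₁ h₂ t
      _ ≤ r U + (R + offset S₁.γy e₁ e₂ e₃ s_l S₁.d S₂.d) := by
          gcongr; exact (monotone_overshoot hX).trans (hU₀ _ hU)
      _ ≤ _ := by rw [add_left_comm, ← add_assoc]; exact le_self_add
  calc p₁.y t ≤ level S₁.γy e₁ e₂ e₃ s_l (S₁.γu p₁.U + S₁.d + ε') (S₂.γu p₂.U + S₂.d + ε') :=
        ht p₁ p₂ h₁ h₂ hX hU
    _ ≤ R + offset S₁.γy e₁ e₂ e₃ s_l (S₁.d + ε') (S₂.d + ε') := by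
        refine level_le_gain_add_offset S₁.classK_γy.monotone ?_ ?_ <;>
          rw [add_assoc] <;> gcongr <;> [exact S₁.monotone_γu le_self_add;
            exact S₂.monotone_γu le_add_self]
    _ ≤ _ := by rw [add_assoc _ _ ε]; exact add_le_add le_self_add hε'c.le

theorem exists_classKL_bound (hsg : ∀ s, s_l ≤ s → Ip e₁ (S₁.γy (Ip e₂ (S₂.γy s))) ≤ s)
    {r : ℝ≥0 → ℝ≥0} (hr : Tendsto r atTop atTop) :
    ∃ β, ClassKL β ∧ ∀ p₁ p₂ : Trajectory, S₁.IsTrajectory p₁ p₂.y → S₂.IsTrajectory p₂ p₁.y →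
      ∀ t, p₁.y t ≤ β (p₁.X + p₂.X) t +
        (gain S₁.γy e₁ e₂ e₃ S₁.γu S₂.γu (p₁.U + p₂.U) + r (p₁.U + p₂.U)) +
          offset S₁.γy e₁ e₂ e₃ s_l S₁.d S₂.d := by
  obtain ⟨β, hβ, hy⟩ := exists_classKL_of_bounds
    (ι := {q : Trajectory × Trajectory // S₁.IsTrajectory q.1 q.2.y ∧ S₂.IsTrajectory q.2 q.1.y})
    (fun q => q.1.1.X + q.1.2.X) (fun q => q.1.1.y)
    (fun q => gain S₁.γy e₁ e₂ e₃ S₁.γu S₂.γu (q.1.1.U + q.1.2.U) + r (q.1.1.U + q.1.2.U) +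
      offset S₁.γy e₁ e₂ e₃ s_l S₁.d S₂.d)
    _ continuous_overshoot monotone_overshoot overshoot_zero
    (fun q t => (y_le_overshoot_add hsg q.2.1 q.2.2 t).trans (by gcongr; exact le_self_add))
    (fun s ε hε => (eventually_y_le hsg hr s ε hε).mono fun t ht q hX => ht _ _ q.2.1 q.2.2 hX)
  exact ⟨β, hβ, fun p₁ p₂ h₁ h₂ t => (hy ⟨(p₁, p₂), h₁, h₂⟩ t).trans_eq (by ring)⟩

end SmallGain

theorem generalized_small_gain_signal_form_general
    (β₁ β₂ : ℝ≥0 → ℝ≥0 → ℝ≥0)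
    (γ₁y γ₂y γ₁u γ₂u α₁0 α₂0 : ℝ≥0 → ℝ≥0)
    (ρ₁ ρ₂ ρ₁inv ρ₂inv : ℝ≥0 → ℝ≥0)
    (d₁ d₂ s_l D₁0 D₂0 : ℝ≥0)
    (hβ₁ : ClassKL β₁) (hβ₂ : ClassKL β₂)
    (hγ₁y : ClassK γ₁y) (hγ₂y : ClassK γ₂y)
    (hγ₁u : ClassK γ₁u) (hγ₂u : ClassK γ₂u)
    (hα₁0 : ClassK α₁0) (hα₂0 : ClassK α₂0)
    (hρ₁ : ClassKInf ρ₁) (hρ₂ : ClassKInf ρ₂)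
    (hρ₁invr : Function.RightInverse ρ₁inv ρ₁)
    (hρ₂invr : Function.RightInverse ρ₂inv ρ₂)
    (hsg₁ : ∀ s : ℝ≥0, s_l ≤ s → Ip ρ₂ (γ₂y (Ip ρ₁ (γ₁y s))) ≤ s)
    (hsg₂ : ∀ s : ℝ≥0, s_l ≤ s → Ip ρ₁ (γ₁y (Ip ρ₂ (γ₂y s))) ≤ s) :
    ∀ ρ₃ r₃1 : ℝ≥0 → ℝ≥0, ClassKInf ρ₃ → ClassKInf r₃1 →
    ∃ β₁' β₂' : ℝ≥0 → ℝ≥0 → ℝ≥0, ∃ r₃2 : ℝ≥0 → ℝ≥0, ∃ d₁' d₂' : ℝ≥0,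
      ClassKL β₁' ∧ ClassKL β₂' ∧ ClassK r₃2 ∧
      (s_l = 0 ∧ d₁ = 0 ∧ d₂ = 0 ∧ D₁0 = 0 ∧ D₂0 = 0 → d₁' = 0 ∧ d₂' = 0) ∧
      ∀ (x₁ x₂ y₁ y₂ : ℝ≥0 → ℝ≥0) (X₁ X₂ U₁ U₂ : ℝ≥0),
        (∀ t : ℝ≥0, BddAbove (x₁ '' Set.Icc 0 t) ∧ BddAbove (x₂ '' Set.Icc 0 t) ∧
          BddAbove (y₁ '' Set.Icc 0 t) ∧ BddAbove (y₂ '' Set.Icc 0 t)) →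
        (∀ t₀ t : ℝ≥0, t₀ ≤ t →
          y₁ t ≤ β₁ (x₁ t₀) (t - t₀) + γ₁y (sSup (y₂ '' Set.Icc t₀ t)) + γ₁u U₁ + d₁) →
        (∀ t₀ t : ℝ≥0, t₀ ≤ t →
          y₂ t ≤ β₂ (x₂ t₀) (t - t₀) + γ₂y (sSup (y₁ '' Set.Icc t₀ t)) + γ₂u U₂ + d₂) →
        (∀ t : ℝ≥0,
          x₁ t ≤ α₁0 (X₁ + sSup ((fun s => U₁ + y₁ s + y₂ s) '' Set.Icc 0 t)) + D₁0) →
        (∀ t : ℝ≥0,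
          x₂ t ≤ α₂0 (X₂ + sSup ((fun s => U₂ + y₁ s + y₂ s) '' Set.Icc 0 t)) + D₂0) →
        x₁ 0 ≤ X₁ → x₂ 0 ≤ X₂ →
        ∀ t : ℝ≥0,
          y₁ t ≤ β₁' (X₁ + X₂) t +
              (Ip ρ₁inv (Ip ρ₃ (Ip ρ₃ (γ₁u (U₁ + U₂) +
                  γ₁y (Ip ρ₂inv (Ip ρ₃ (Ip ρ₃ (γ₂u (U₁ + U₂))))))))
                + r₃1 (U₁ + U₂)) + d₁' ∧
          y₂ t ≤ β₂' (X₁ + X₂) t +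
              (Ip ρ₂inv (Ip ρ₃ (Ip ρ₃ (γ₂u (U₁ + U₂) +
                  γ₂y (Ip ρ₁inv (Ip ρ₃ (Ip ρ₃ (γ₁u (U₁ + U₂))))))))
                + r₃2 (U₁ + U₂)) + d₂' := by
  intro ρ₃ r₃1 hρ₃ hr₃1
  let e₁ := StrictMono.orderIsoOfRightInverse ρ₁ hρ₁.1.2.1 ρ₁inv hρ₁invr
  let e₂ := StrictMono.orderIsoOfRightInverse ρ₂ hρ₂.1.2.1 ρ₂inv hρ₂invr
  let e₃ := StrictMono.orderIsoOfSurjective ρ₃ hρ₃.1.2.1 hρ₃.surjective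
  let S₁ : Subsystem := ⟨β₁, γ₁y, γ₁u, α₁0, d₁, D₁0, hβ₁, hγ₁y, hγ₁u.monotone, hα₁0.monotone⟩
  let S₂ : Subsystem := ⟨β₂, γ₂y, γ₂u, α₂0, d₂, D₂0, hβ₂, hγ₂y, hγ₂u.monotone, hα₂0.monotone⟩
  obtain ⟨β₁', hβ₁', hy₁⟩ := SmallGain.exists_classKL_bound (S₁ := S₁) (S₂ := S₂) (e₁ := e₁)
    (e₂ := e₂) (e₃ := e₃) hsg₂ hr₃1.2
  obtain ⟨β₂', hβ₂', hy₂⟩ := SmallGain.exists_classKL_bound (S₁ := S₂) (S₂ := S₁) (e₁ := e₂)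
    (e₂ := e₁) (e₃ := e₃) hsg₁ hr₃1.2
  refine ⟨β₁', β₂', r₃1, SmallGain.offset γ₁y e₁ e₂ e₃ s_l d₁ d₂,
    SmallGain.offset γ₂y e₂ e₁ e₃ s_l d₂ d₁, hβ₁', hβ₂', hr₃1.1, ?_, ?_⟩
  · rintro ⟨rfl, rfl, rfl, -, -⟩
    exact ⟨SmallGain.offset_zero hγ₁y.2.2, SmallGain.offset_zero hγ₂y.2.2⟩
  intro x₁ x₂ y₁ y₂ X₁ X₂ U₁ U₂ hbdd hio₁ hio₂ huo₁ huo₂ hX₁ hX₂ t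
  let p₁ : Trajectory := ⟨x₁, y₁, X₁, U₁⟩
  let p₂ : Trajectory := ⟨x₂, y₂, X₂, U₂⟩
  have h₁ : S₁.IsTrajectory p₁ p₂.y := ⟨fun t => (hbdd t).2.2.1, hio₁, huo₁, hX₁⟩
  have h₂ : S₂.IsTrajectory p₂ p₁.y := by
    refine ⟨fun t => (hbdd t).2.2.2, hio₂, fun t => ?_, hX₂⟩
    have hsum : (fun s => U₂ + y₂ s + y₁ s) = fun s => U₂ + y₁ s + y₂ s :=
      funext fun s => add_right_comm _ _ _
    show x₂ t ≤ α₂0 (X₂ + sSup ((fun s => U₂ + y₂ s + y₁ s) '' Icc 0 t)) + D₂0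
    rw [hsum]
    exact huo₂ t
  have hy₂' := hy₂ p₂ p₁ h₂ h₁ t
  rw [add_comm p₂.X, add_comm p₂.U] at hy₂'
  exact ⟨hy₁ p₁ p₂ h₁ h₂ t, hy₂'⟩

/-- Generalized small-gain theorem with individual gains (signal form).
`ρᵢinv` denotes the inverse bijection of `ρᵢ`; the gains in the conclusion are
`r₁(s) = (Id+ρ₁⁻¹)((Id+ρ₃)²(γ₁ᵘ(s) + γ₁ʸ((Id+ρ₂⁻¹)((Id+ρ₃)²(γ₂ᵘ(s))))))` and
`r₂(s) = (Id+ρ₂⁻¹)((Id+ρ₃)²(γ₂ᵘ(s) + γ₂ʸ((Id+ρ₁⁻¹)((Id+ρ₃)²(γ₁ᵘ(s))))))`,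
written out in full. -/
theorem generalized_small_gain_signal_form
    (β₁ β₂ : ℝ≥0 → ℝ≥0 → ℝ≥0)
    (γ₁y γ₂y γ₁u γ₂u α₁0 α₂0 : ℝ≥0 → ℝ≥0)
    (ρ₁ ρ₂ ρ₁inv ρ₂inv : ℝ≥0 → ℝ≥0)
    (d₁ d₂ s_l D₁0 D₂0 : ℝ≥0)
    (hβ₁ : ClassKL β₁) (hβ₂ : ClassKL β₂)
    (hγ₁y : ClassK γ₁y) (hγ₂y : ClassK γ₂y)
    (hγ₁u : ClassK γ₁u) (hγ₂u : ClassK γ₂u)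
    (hα₁0 : ClassK α₁0) (hα₂0 : ClassK α₂0)
    (hρ₁ : ClassKInf ρ₁) (hρ₂ : ClassKInf ρ₂)
    (hρ₁invl : Function.LeftInverse ρ₁inv ρ₁)
    (hρ₁invr : Function.RightInverse ρ₁inv ρ₁)
    (hρ₂invl : Function.LeftInverse ρ₂inv ρ₂)
    (hρ₂invr : Function.RightInverse ρ₂inv ρ₂)
    (hsg₁ : ∀ s : ℝ≥0, s_l ≤ s → Ip ρ₂ (γ₂y (Ip ρ₁ (γ₁y s))) ≤ s)
    (hsg₂ : ∀ s : ℝ≥0, s_l ≤ s → Ip ρ₁ (γ₁y (Ip ρ₂ (γ₂y s))) ≤ s) :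
    ∀ ρ₃ r₃1 : ℝ≥0 → ℝ≥0, ClassKInf ρ₃ → ClassKInf r₃1 →
    ∃ β₁' β₂' : ℝ≥0 → ℝ≥0 → ℝ≥0, ∃ r₃2 : ℝ≥0 → ℝ≥0, ∃ d₁' d₂' : ℝ≥0,
      ClassKL β₁' ∧ ClassKL β₂' ∧ ClassK r₃2 ∧
      (s_l = 0 ∧ d₁ = 0 ∧ d₂ = 0 ∧ D₁0 = 0 ∧ D₂0 = 0 → d₁' = 0 ∧ d₂' = 0) ∧
      ∀ (x₁ x₂ y₁ y₂ : ℝ≥0 → ℝ≥0) (X₁ X₂ U₁ U₂ : ℝ≥0),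
        (∀ t : ℝ≥0, BddAbove (x₁ '' Set.Icc 0 t) ∧ BddAbove (x₂ '' Set.Icc 0 t) ∧
          BddAbove (y₁ '' Set.Icc 0 t) ∧ BddAbove (y₂ '' Set.Icc 0 t)) →
        (∀ t₀ t : ℝ≥0, t₀ ≤ t →
          y₁ t ≤ β₁ (x₁ t₀) (t - t₀) + γ₁y (sSup (y₂ '' Set.Icc t₀ t)) + γ₁u U₁ + d₁) →
        (∀ t₀ t : ℝ≥0, t₀ ≤ t →
          y₂ t ≤ β₂ (x₂ t₀) (t - t₀) + γ₂y (sSup (y₁ '' Set.Icc t₀ t)) + γ₂u U₂ + d₂) →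
        (∀ t : ℝ≥0,
          x₁ t ≤ α₁0 (X₁ + sSup ((fun s => U₁ + y₁ s + y₂ s) '' Set.Icc 0 t)) + D₁0) →
        (∀ t : ℝ≥0,
          x₂ t ≤ α₂0 (X₂ + sSup ((fun s => U₂ + y₁ s + y₂ s) '' Set.Icc 0 t)) + D₂0) →
        x₁ 0 ≤ X₁ → x₂ 0 ≤ X₂ →
        ∀ t : ℝ≥0,
          y₁ t ≤ β₁' (X₁ + X₂) t +
              (Ip ρ₁inv (Ip ρ₃ (Ip ρ₃ (γ₁u (U₁ + U₂) +
                  γ₁y (Ip ρ₂inv (Ip ρ₃ (Ip ρ₃ (γ₂u (U₁ + U₂))))))))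
                + r₃1 (U₁ + U₂)) + d₁' ∧
          y₂ t ≤ β₂' (X₁ + X₂) t +
              (Ip ρ₂inv (Ip ρ₃ (Ip ρ₃ (γ₂u (U₁ + U₂) +
                  γ₂y (Ip ρ₁inv (Ip ρ₃ (Ip ρ₃ (γ₁u (U₁ + U₂))))))))
                + r₃2 (U₁ + U₂)) + d₂' :=
  generalized_small_gain_signal_form_general β₁ β₂ γ₁y γ₂y γ₁u γ₂u α₁0 α₂0 ρ₁ ρ₂ ρ₁inv ρ₂inv d₁ d₂
    s_l D₁0 D₂0 hβ₁ hβ₂ hγ₁y hγ₂y hγ₁u hγ₂u hα₁0 hα₂0 hρ₁ hρ₂ hρ₁invr hρ₂invr hsg₁ hsg₂
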